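/- The number of pairs (T, c) where T is a rooted labeled tree and c = (u,v) is a pair of distinct vertices with v a strict ancestor of u, with total label set {1,...,n}, equals the number of pairs ((T1, a), (T2, b)) of rooted labeled trees with distinguished vertices a ∈ T1, b ∈ T2, whose label sets partition {1,...,n} into two nonempty parts. -/
import Mathlib
open scoped Classical

/-- Parent map encoding of a rooted labeled tree on an arbitrary vertex type. -/
def IsTreeFun {α : Type*} (f : α → α) : Prop :=
  ∃ r, f r = r ∧ ∀ v, ∃ k, f^[k] v = r

namespace Catalyst

open Function

variable {α : Type*}

/-- `r` is a root for the parent map `f`. -/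
def IsRoot (f : α → α) (r : α) : Prop := f r = r ∧ ∀ v, ∃ k, f^[k] v = r

theorem isTreeFun_def {f : α → α} : IsTreeFun f ↔ ∃ r, IsRoot f r := Iff.rfl

theorem IsRoot.iter {f : α → α} {r : α} (h : IsRoot f r) (k : ℕ) : f^[k] r = r :=
  Function.iterate_fixed h.1 k

theorem IsRoot.fixed_eq {f : α → α} {r p : α} (h : IsRoot f r) (hp : f p = p) : p = r := by
  obtain ⟨k, hk⟩ := h.2 p
  rwa [Function.iterate_fixed hp k] at hk

theorem IsRoot.cycle_eq {f : α → α} {r p : α} {m : ℕ} (h : IsRoot f r) (hm : m ≠ 0)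
    (hp : f^[m] p = p) : p = r := by
  obtain ⟨k, hk⟩ := h.2 p
  have h1 : ∀ t, f^[t * m] p = p := by
    intro t
    induction t with
    | zero => simp
    | succ t ih => rw [Nat.succ_mul, Function.iterate_add_apply, hp, ih]
  have hkm : k ≤ k * m := Nat.le_mul_of_pos_right k (Nat.pos_of_ne_zero hm)
  calc p = f^[k * m] p := (h1 k).symm
    _ = f^[(k * m - k) + k] p := by rw [Nat.sub_add_cancel hkm]
    _ = f^[k * m - k] (f^[k] p) := Function.iterate_add_apply ..
    _ = r := by rw [hk, h.iter]

theorem IsRoot.unique {f : α → α} {r r' : α} (h : IsRoot f r) (h' : IsRoot f r') : r' = r :=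
  h.fixed_eq h'.1

/-- `z` lies in the subtree below `w`. -/
def Sub (f : α → α) (w z : α) : Prop := ∃ j, f^[j] z = w

theorem sub_self (f : α → α) (w : α) : Sub f w w := ⟨0, rfl⟩

theorem Sub.of_apply {f : α → α} {w z : α} (h : Sub f w (f z)) : Sub f w z := by
  obtain ⟨j, hj⟩ := h
  exact ⟨j + 1, by rwa [Function.iterate_succ_apply]⟩

theorem Sub.apply {f : α → α} {w z : α} (h : Sub f w z) (hzw : z ≠ w) : Sub f w (f z) := by
  obtain ⟨j, hj⟩ := h
  cases j with
  | zero => exact absurd hj hzw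
  | succ i => exact ⟨i, by rwa [← Function.iterate_succ_apply]⟩

theorem not_sub_apply {f : α → α} {w z : α} (h : ¬ Sub f w z) : ¬ Sub f w (f z) :=
  fun hh => h hh.of_apply

theorem coe_iterate {p : α → Prop} {f : α → α} (g : Subtype p → Subtype p)
    (hg : ∀ z, (g z : α) = f (z : α)) (m : ℕ) (z : Subtype p) :
    (g^[m] z : α) = f^[m] (z : α) := by
  induction m generalizing z with
  | zero => rfl
  | succ m ih =>
      rw [Function.iterate_succ_apply, Function.iterate_succ_apply, ih, hg]

theorem iterate_agree {p : α → Prop} {f : α → α} (g : Subtype p → Subtype p) (w : Subtype p)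
    (hg : ∀ z : Subtype p, z ≠ w → (g z : α) = f (z : α)) :
    ∀ (m : ℕ) (z : Subtype p), (∀ i < m, g^[i] z ≠ w) → f^[m] (z : α) = (g^[m] z : α) := by
  intro m
  induction m with
  | zero => intro z _; rfl
  | succ m ih =>
      intro z hmin
      have hz : z ≠ w := by simpa using hmin 0 (Nat.succ_pos m)
      have h1 : (g z : α) = f (z : α) := hg z hz
      have h2 : ∀ i < m, g^[i] (g z) ≠ w := by
        intro i hi
        rw [← Function.iterate_succ_apply]
        exact hmin (i + 1) (Nat.succ_lt_succ hi)
      rw [Function.iterate_succ_apply, Function.iterate_succ_apply, ← h1, ih (g z) h2]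

theorem iterate_reach {p : α → Prop} {f : α → α} (g : Subtype p → Subtype p) (w : Subtype p)
    (hg : ∀ z : Subtype p, z ≠ w → (g z : α) = f (z : α)) (hgw : g w = w) :
    ∀ (m : ℕ) (z : Subtype p), (∀ i < m, f^[i] (z : α) ≠ (w : α)) → f^[m] (z : α) = (w : α) →
      g^[m] z = w := by
  intro m
  induction m with
  | zero => intro z _ h0; exact Subtype.ext h0
  | succ m ih =>
      intro z hmin hm
      have hz : z ≠ w := by
        intro h
        exact hmin 0 (Nat.succ_pos m) (by simp [h])
      have h1 : (g z : α) = f (z : α) := hg z hz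
      have h2 : ∀ i < m, f^[i] ((g z : Subtype p) : α) ≠ (w : α) := by
        intro i hi
        rw [h1, ← Function.iterate_succ_apply]
        exact hmin (i + 1) (Nat.succ_lt_succ hi)
      have h3 : f^[m] ((g z : Subtype p) : α) = (w : α) := by
        rw [h1, ← Function.iterate_succ_apply]; exact hm
      rw [Function.iterate_succ_apply]
      exact ih (g z) h2 h3


variable {n : ℕ}

abbrev LTy (n : ℕ) := {x : (Fin n → Fin n) × Fin n × Fin n //
    IsTreeFun x.1 ∧ x.2.2 ≠ x.2.1 ∧ ∃ k, x.1^[k] x.2.1 = x.2.2}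

abbrev RTy (n : ℕ) := Σ s : Finset (Fin n),
    {y : ((↥s → ↥s) × ↥s) ×
         ((↥(sᶜ : Finset (Fin n)) → ↥(sᶜ : Finset (Fin n))) × ↥(sᶜ : Finset (Fin n))) //
      IsTreeFun y.1.1 ∧ IsTreeFun y.2.1}

section Forward

variable {f : Fin n → Fin n} {u v : Fin n}

/-- The child of `v` on the path from `u` up to `v`. -/
noncomputable def fw (hanc : ∃ k, f^[k] u = v) : Fin n := f^[Nat.find hanc - 1] u

theorem find_ne_zero (hne : v ≠ u) (hanc : ∃ k, f^[k] u = v) : Nat.find hanc ≠ 0 := by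
  intro h
  have := Nat.find_spec hanc
  rw [h] at this
  exact hne this.symm

theorem fw_apply (hne : v ≠ u) (hanc : ∃ k, f^[k] u = v) : f (fw hanc) = v := by
  have h0 : 0 < Nat.find hanc := Nat.pos_of_ne_zero (find_ne_zero hne hanc)
  have h1 : f^[Nat.find hanc - 1 + 1] u = f (f^[Nat.find hanc - 1] u) :=
    Function.iterate_succ_apply' f _ u
  have h2 : Nat.find hanc - 1 + 1 = Nat.find hanc := Nat.succ_pred_eq_of_pos h0
  rw [fw, ← h1, h2]
  exact Nat.find_spec hanc

theorem fw_min (hne : v ≠ u) (hanc : ∃ k, f^[k] u = v) : fw hanc ≠ v :=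
  Nat.find_min hanc (Nat.sub_lt (Nat.pos_of_ne_zero (find_ne_zero hne hanc)) one_pos)

theorem sub_fw_u (hanc : ∃ k, f^[k] u = v) : Sub f (fw hanc) u := ⟨Nat.find hanc - 1, rfl⟩

theorem not_sub_fw_v (hT : IsTreeFun f) (hne : v ≠ u) (hanc : ∃ k, f^[k] u = v) :
    ¬ Sub f (fw hanc) v := by
  obtain ⟨r, hr⟩ := hT
  have hr' : IsRoot f r := hr
  rintro ⟨j, hj⟩
  have hw : f (fw hanc) = v := fw_apply hne hanc
  have hcyc : f^[j + 1] (fw hanc) = fw hanc := by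
    rw [Function.iterate_succ_apply, hw, hj]
  have hwr : fw hanc = r := hr'.cycle_eq (Nat.succ_ne_zero j) hcyc
  have hvr : v = r := by rw [← hw, hwr, hr'.1]
  exact fw_min hne hanc (by rw [hwr, ← hvr])

theorem fw_ne_root (hne : v ≠ u) (hanc : ∃ k, f^[k] u = v) {r : Fin n} (hr : IsRoot f r) :
    fw hanc ≠ r := by
  intro h
  have hvr : v = r := by rw [← fw_apply hne hanc, h, hr.1]
  exact fw_min hne hanc (by rw [h, ← hvr])

theorem not_sub_fw_root (hne : v ≠ u) (hanc : ∃ k, f^[k] u = v) {r : Fin n} (hr : IsRoot f r) :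
    ¬ Sub f (fw hanc) r := by
  rintro ⟨j, hj⟩
  rw [hr.iter] at hj
  exact fw_ne_root hne hanc hr hj.symm

/-- The label set of the part containing the root. -/
noncomputable def fS (hanc : ∃ k, f^[k] u = v) : Finset (Fin n) :=
  Finset.univ.filter (fun z => ¬ Sub f (fw hanc) z)

theorem mem_fS (hanc : ∃ k, f^[k] u = v) {z : Fin n} :
    z ∈ fS hanc ↔ ¬ Sub f (fw hanc) z := by
  simp [fS]

theorem mem_fS_compl (hanc : ∃ k, f^[k] u = v) {z : Fin n} :
    z ∈ (fS hanc)ᶜ ↔ Sub f (fw hanc) z := by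
  simp [fS, Finset.mem_compl]

/-- The restricted tree on the root part. -/
noncomputable def fG1 (hanc : ∃ k, f^[k] u = v) : ↥(fS hanc) → ↥(fS hanc) :=
  fun z => ⟨f z, (mem_fS hanc).mpr (not_sub_apply ((mem_fS hanc).mp z.2))⟩

/-- The subtree below `fw`, rerooted at `fw`. -/
noncomputable def fG2 (hanc : ∃ k, f^[k] u = v) : ↥((fS hanc)ᶜ) → ↥((fS hanc)ᶜ) :=
  fun z => if h : (z : Fin n) = fw hanc then z
    else ⟨f z, (mem_fS_compl hanc).mpr (((mem_fS_compl hanc).mp z.2).apply h)⟩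

theorem coe_fG1 (hanc : ∃ k, f^[k] u = v) (z : ↥(fS hanc)) : (fG1 hanc z : Fin n) = f z := rfl

theorem coe_fG2 (hanc : ∃ k, f^[k] u = v) (z : ↥((fS hanc)ᶜ)) (hz : (z : Fin n) ≠ fw hanc) :
    (fG2 hanc z : Fin n) = f z := by
  rw [fG2, dif_neg hz]

theorem isRoot_fG1 (hanc : ∃ k, f^[k] u = v) {r : Fin n} (hr : IsRoot f r) (hrs : r ∈ fS hanc) :
    IsRoot (fG1 hanc) ⟨r, hrs⟩ := by
  constructor
  · exact Subtype.ext (by rw [coe_fG1, hr.1])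
  · intro z
    obtain ⟨k, hk⟩ := hr.2 (z : Fin n)
    exact ⟨k, Subtype.ext (by rw [coe_iterate (fG1 hanc) (coe_fG1 hanc) k z, hk])⟩

theorem mem_fw_compl (hanc : ∃ k, f^[k] u = v) : fw hanc ∈ (fS hanc)ᶜ :=
  (mem_fS_compl hanc).mpr (sub_self f _)

theorem isRoot_fG2 (hanc : ∃ k, f^[k] u = v) :
    IsRoot (fG2 hanc) ⟨fw hanc, mem_fw_compl hanc⟩ := by
  have hgw : fG2 hanc ⟨fw hanc, mem_fw_compl hanc⟩ = ⟨fw hanc, mem_fw_compl hanc⟩ := by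
    rw [fG2]; exact dif_pos rfl
  have hg : ∀ z : ↥((fS hanc)ᶜ), z ≠ ⟨fw hanc, mem_fw_compl hanc⟩ →
      (fG2 hanc z : Fin n) = f z := by
    intro z hz
    exact coe_fG2 hanc z (fun h => hz (Subtype.ext h))
  constructor
  · exact hgw
  · intro z
    have hsub : ∃ j, f^[j] (z : Fin n) = fw hanc := (mem_fS_compl hanc).mp z.2
    refine ⟨Nat.find hsub,
      iterate_reach (fG2 hanc) _ hg hgw (Nat.find hsub) z ?_ (Nat.find_spec hsub)⟩
    intro i hi
    exact Nat.find_min hsub hi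

theorem v_mem_fS (hT : IsTreeFun f) (hne : v ≠ u) (hanc : ∃ k, f^[k] u = v) : v ∈ fS hanc :=
  (mem_fS hanc).mpr (not_sub_fw_v hT hne hanc)

theorem u_mem_fS_compl (hanc : ∃ k, f^[k] u = v) : u ∈ (fS hanc)ᶜ :=
  (mem_fS_compl hanc).mpr (sub_fw_u hanc)

/-- Splitting map. -/
noncomputable def Fmap (x : LTy n) : RTy n :=
  ⟨fS x.2.2.2,
    ⟨⟨(fG1 x.2.2.2, ⟨x.1.2.2, v_mem_fS x.2.1 x.2.2.1 x.2.2.2⟩),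
      (fG2 x.2.2.2, ⟨x.1.2.1, u_mem_fS_compl x.2.2.2⟩)⟩,
      ⟨⟨x.2.1.choose, (mem_fS x.2.2.2).mpr
          (not_sub_fw_root x.2.2.1 x.2.2.2 x.2.1.choose_spec)⟩,
        isRoot_fG1 x.2.2.2 x.2.1.choose_spec _⟩,
      ⟨_, isRoot_fG2 x.2.2.2⟩⟩⟩

end Forward
section Backward

variable {s : Finset (Fin n)}

/-- Glue two trees: hang the root `r2` of the second tree below the mark `a` of the first. -/
noncomputable def glue (g1 : ↥s → ↥s) (a : ↥s)
    (g2 : ↥(sᶜ : Finset (Fin n)) → ↥(sᶜ : Finset (Fin n))) (r2 : ↥(sᶜ : Finset (Fin n))) :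
    Fin n → Fin n :=
  fun z => if hz : z ∈ s then (g1 ⟨z, hz⟩ : Fin n)
    else if z = (r2 : Fin n) then (a : Fin n)
    else (g2 ⟨z, Finset.mem_compl.mpr hz⟩ : Fin n)

variable {g1 : ↥s → ↥s} {a : ↥s} {g2 : ↥(sᶜ : Finset (Fin n)) → ↥(sᶜ : Finset (Fin n))}
  {r2 : ↥(sᶜ : Finset (Fin n))}

theorem glue_mem (z : Fin n) (hz : z ∈ s) : glue g1 a g2 r2 z = (g1 ⟨z, hz⟩ : Fin n) := by
  rw [glue, dif_pos hz]

theorem glue_coe (z : ↥s) : glue g1 a g2 r2 (z : Fin n) = (g1 z : Fin n) := glue_mem _ z.2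

theorem glue_r2 : glue g1 a g2 r2 (r2 : Fin n) = (a : Fin n) := by
  rw [glue, dif_neg (Finset.mem_compl.mp r2.2), if_pos rfl]

theorem glue_compl (z : Fin n) (hz : z ∈ (sᶜ : Finset (Fin n))) (hr : z ≠ (r2 : Fin n)) :
    glue g1 a g2 r2 z = (g2 ⟨z, hz⟩ : Fin n) := by
  rw [glue, dif_neg (Finset.mem_compl.mp hz), if_neg hr]

theorem glue_coe_compl (z : ↥(sᶜ : Finset (Fin n))) (hr : z ≠ r2) :
    glue g1 a g2 r2 (z : Fin n) = (g2 z : Fin n) := glue_compl _ z.2 (fun h => hr (Subtype.ext h))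

theorem glue_iterate_coe (m : ℕ) (z : ↥s) :
    (glue g1 a g2 r2)^[m] (z : Fin n) = (g1^[m] z : Fin n) :=
  (coe_iterate g1 (fun z => (glue_coe z).symm) m z).symm

theorem glue_iterate_compl (hr2 : IsRoot g2 r2) (z : ↥(sᶜ : Finset (Fin n))) :
    (glue g1 a g2 r2)^[Nat.find (hr2.2 z)] (z : Fin n) = (r2 : Fin n) := by
  have h := iterate_agree (f := glue g1 a g2 r2) g2 r2
    (fun z hz => (glue_coe_compl z hz).symm) (Nat.find (hr2.2 z)) z
    (fun i hi => Nat.find_min (hr2.2 z) hi)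
  rw [h, Nat.find_spec (hr2.2 z)]

theorem isRoot_glue {r1 : ↥s} (hr1 : IsRoot g1 r1) (hr2 : IsRoot g2 r2) :
    IsRoot (glue g1 a g2 r2) (r1 : Fin n) := by
  constructor
  · rw [glue_coe, hr1.1]
  · intro z
    by_cases hz : z ∈ s
    · obtain ⟨k, hk⟩ := hr1.2 ⟨z, hz⟩
      exact ⟨k, by rw [show z = ((⟨z, hz⟩ : ↥s) : Fin n) from rfl, glue_iterate_coe, hk]⟩
    · have hz' : z ∈ (sᶜ : Finset (Fin n)) := Finset.mem_compl.mpr hz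
      obtain ⟨t, ht⟩ := hr1.2 a
      refine ⟨t + (1 + Nat.find (hr2.2 ⟨z, hz'⟩)), ?_⟩
      rw [Function.iterate_add_apply, Function.iterate_add_apply]
      have h1 : (glue g1 a g2 r2)^[Nat.find (hr2.2 ⟨z, hz'⟩)] z = (r2 : Fin n) :=
        glue_iterate_compl hr2 ⟨z, hz'⟩
      rw [h1]
      have h2 : (glue g1 a g2 r2)^[1] (r2 : Fin n) = (a : Fin n) := glue_r2
      rw [h2, show (a : Fin n) = ((a : ↥s) : Fin n) from rfl, glue_iterate_coe, ht]

theorem glue_anc (hr2 : IsRoot g2 r2) (b : ↥(sᶜ : Finset (Fin n))) :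
    ∃ k, (glue g1 a g2 r2)^[k] (b : Fin n) = (a : Fin n) := by
  refine ⟨Nat.find (hr2.2 b) + 1, ?_⟩
  rw [Function.iterate_succ_apply', glue_iterate_compl hr2 b, glue_r2]

/-- Gluing map. -/
noncomputable def Gmap (y : RTy n) : LTy n :=
  ⟨(glue y.2.1.1.1 y.2.1.1.2 y.2.1.2.1 y.2.2.2.choose, (y.2.1.2.2 : Fin n), (y.2.1.1.2 : Fin n)),
    ⟨(y.2.2.1.choose : Fin n), isRoot_glue y.2.2.1.choose_spec y.2.2.2.choose_spec⟩,
    (fun h => Finset.mem_compl.mp y.2.1.2.2.2 (h ▸ y.2.1.1.2.2) :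
      ((y.2.1.1.2 : Fin n) ≠ (y.2.1.2.2 : Fin n))),
    glue_anc y.2.2.2.choose_spec y.2.1.2.2⟩

end Backward
section Backward2

variable {s : Finset (Fin n)} {g1 : ↥s → ↥s} {a : ↥s}
  {g2 : ↥(sᶜ : Finset (Fin n)) → ↥(sᶜ : Finset (Fin n))} {r2 : ↥(sᶜ : Finset (Fin n))}

theorem glue_iterate_le (hr2 : IsRoot g2 r2) (z : ↥(sᶜ : Finset (Fin n))) {i : ℕ}
    (hi : i ≤ Nat.find (hr2.2 z)) :
    (glue g1 a g2 r2)^[i] (z : Fin n) = (g2^[i] z : Fin n) :=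
  iterate_agree g2 r2 (fun z hz => (glue_coe_compl z hz).symm) i z
    (fun j hj => Nat.find_min (hr2.2 z) (lt_of_lt_of_le hj hi))

theorem glue_find (hr2 : IsRoot g2 r2) (b : ↥(sᶜ : Finset (Fin n)))
    (hanc' : ∃ k, (glue g1 a g2 r2)^[k] (b : Fin n) = (a : Fin n)) :
    Nat.find hanc' = Nat.find (hr2.2 b) + 1 := by
  rw [Nat.find_eq_iff]
  constructor
  · rw [Function.iterate_succ_apply', glue_iterate_compl hr2 b, glue_r2]
  · intro i hi h
    have hle : i ≤ Nat.find (hr2.2 b) := Nat.lt_succ_iff.mp hi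
    rw [glue_iterate_le hr2 b hle] at h
    have hmem : (a : Fin n) ∈ (sᶜ : Finset (Fin n)) := h ▸ (g2^[i] b).2
    exact Finset.mem_compl.mp hmem a.2

theorem glue_fw (hr2 : IsRoot g2 r2) (b : ↥(sᶜ : Finset (Fin n)))
    (hanc' : ∃ k, (glue g1 a g2 r2)^[k] (b : Fin n) = (a : Fin n)) :
    fw hanc' = (r2 : Fin n) := by
  rw [fw, glue_find hr2 b hanc', Nat.add_sub_cancel]
  exact glue_iterate_compl hr2 b

theorem glue_fS (hr2 : IsRoot g2 r2) (b : ↥(sᶜ : Finset (Fin n)))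
    (hanc' : ∃ k, (glue g1 a g2 r2)^[k] (b : Fin n) = (a : Fin n)) :
    fS hanc' = s := by
  ext z
  rw [mem_fS hanc', glue_fw hr2 b hanc']
  constructor
  · intro h
    by_contra hz
    have hz' : z ∈ (sᶜ : Finset (Fin n)) := Finset.mem_compl.mpr hz
    exact absurd ⟨Nat.find (hr2.2 ⟨z, hz'⟩), glue_iterate_compl hr2 ⟨z, hz'⟩⟩ h
  · rintro hz ⟨j, hj⟩
    rw [show z = ((⟨z, hz⟩ : ↥s) : Fin n) from rfl, glue_iterate_coe] at hj
    have hmem : ((g1^[j] ⟨z, hz⟩ : ↥s) : Fin n) ∈ (sᶜ : Finset (Fin n)) := by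
      rw [hj]; exact r2.2
    exact Finset.mem_compl.mp hmem (g1^[j] ⟨z, hz⟩).2

end Backward2

/-- Extensionality for the sigma type of pairs of marked trees. -/
theorem rty_ext {s' s : Finset (Fin n)} (h : s' = s)
    (y' : {y : ((↥s' → ↥s') × ↥s') ×
         ((↥(s'ᶜ : Finset (Fin n)) → ↥(s'ᶜ : Finset (Fin n))) × ↥(s'ᶜ : Finset (Fin n))) //
      IsTreeFun y.1.1 ∧ IsTreeFun y.2.1})
    (y : {y : ((↥s → ↥s) × ↥s) ×
         ((↥(sᶜ : Finset (Fin n)) → ↥(sᶜ : Finset (Fin n))) × ↥(sᶜ : Finset (Fin n))) //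
      IsTreeFun y.1.1 ∧ IsTreeFun y.2.1})
    (hg1 : ∀ z (hz' : z ∈ s') (hz : z ∈ s), (y'.1.1.1 ⟨z, hz'⟩ : Fin n) = y.1.1.1 ⟨z, hz⟩)
    (ha : (y'.1.1.2 : Fin n) = y.1.1.2)
    (hg2 : ∀ z (hz' : z ∈ s'ᶜ) (hz : z ∈ sᶜ), (y'.1.2.1 ⟨z, hz'⟩ : Fin n) = y.1.2.1 ⟨z, hz⟩)
    (hb : (y'.1.2.2 : Fin n) = y.1.2.2) :
    (⟨s', y'⟩ : RTy n) = ⟨s, y⟩ := by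
  subst h
  have hy : y' = y := by
    apply Subtype.ext
    have e1 : y'.1.1.1 = y.1.1.1 := funext fun z => Subtype.ext (hg1 z z.2 z.2)
    have e2 : y'.1.1.2 = y.1.1.2 := Subtype.ext ha
    have e3 : y'.1.2.1 = y.1.2.1 := funext fun z => Subtype.ext (hg2 z z.2 z.2)
    have e4 : y'.1.2.2 = y.1.2.2 := Subtype.ext hb
    calc (y' : _) = ((y'.1.1.1, y'.1.1.2), (y'.1.2.1, y'.1.2.2)) := rfl
      _ = ((y.1.1.1, y.1.1.2), (y.1.2.1, y.1.2.2)) := by rw [e1, e2, e3, e4]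
      _ = y := rfl
  rw [hy]

theorem left_inv : Function.LeftInverse (Gmap (n := n)) Fmap := by
  rintro ⟨⟨f, u, v⟩, hT, hne, hanc⟩
  apply Subtype.ext
  show (glue (fG1 hanc) ⟨v, v_mem_fS hT hne hanc⟩ (fG2 hanc) _, u, v) = (f, u, v)
  set R2 := (⟨⟨fw hanc, mem_fw_compl hanc⟩, isRoot_fG2 hanc⟩ :
    IsTreeFun (fG2 hanc)).choose with hR2def
  have hR2 : (R2 : Fin n) = fw hanc := by
    have := IsRoot.unique (isRoot_fG2 hanc)
      (⟨⟨fw hanc, mem_fw_compl hanc⟩, isRoot_fG2 hanc⟩ :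
        IsTreeFun (fG2 hanc)).choose_spec
    rw [← hR2def] at this
    rw [this]
  refine Prod.ext ?_ rfl
  funext z
  show glue (fG1 hanc) ⟨v, v_mem_fS hT hne hanc⟩ (fG2 hanc) R2 z = f z
  by_cases hz : z ∈ fS hanc
  · rw [glue_mem z hz, coe_fG1]
  · have hz' : z ∈ ((fS hanc)ᶜ : Finset (Fin n)) := Finset.mem_compl.mpr hz
    by_cases hzw : z = fw hanc
    · rw [hzw, ← hR2, glue_r2]
      show v = f (R2 : Fin n)
      rw [hR2]
      exact (fw_apply hne hanc).symm
    · rw [glue_compl z hz' (by rw [hR2]; exact hzw), coe_fG2 hanc ⟨z, hz'⟩ hzw]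

theorem right_inv : Function.RightInverse (Gmap (n := n)) Fmap := by
  rintro ⟨s, ⟨⟨⟨g1, a⟩, ⟨g2, b⟩⟩, h1, h2⟩⟩
  have hr2 : IsRoot g2 h2.choose := h2.choose_spec
  set r2 := h2.choose with hr2def
  have hanc' : ∃ k, (glue g1 a g2 r2)^[k] (b : Fin n) = (a : Fin n) := glue_anc hr2 b
  have hfw : fw hanc' = (r2 : Fin n) := glue_fw hr2 b hanc'
  have hs' : (Fmap (Gmap (⟨s, ⟨⟨(g1, a), (g2, b)⟩, h1, h2⟩⟩ : RTy n))).1 = s :=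
    glue_fS hr2 b hanc'
  refine rty_ext hs' _ ⟨⟨(g1, a), (g2, b)⟩, h1, h2⟩ ?_ rfl ?_ rfl
  · intro z hz' hz
    show (fG1 hanc' ⟨z, hz'⟩ : Fin n) = (g1 ⟨z, hz⟩ : Fin n)
    rw [coe_fG1, glue_mem z hz]
  · intro z hz' hz
    show (fG2 hanc' ⟨z, hz'⟩ : Fin n) = (g2 ⟨z, hz⟩ : Fin n)
    by_cases hzw : z = fw hanc'
    · have hzr : z = (r2 : Fin n) := hzw.trans hfw
      have hA : (fG2 hanc' ⟨z, hz'⟩ : Fin n) = z := by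
        rw [fG2]
        simp only [dif_pos hzw]
      have hB : (g2 ⟨z, hz⟩ : Fin n) = z := by
        have he : (⟨z, hz⟩ : ↥(sᶜ : Finset (Fin n))) = r2 := Subtype.ext hzr
        rw [he, hr2.1, ← hzr]
      rw [hA, hB]
    · rw [coe_fG2 hanc' ⟨z, hz'⟩ hzw,
        glue_compl z hz (by rw [← hfw]; exact hzw)]

noncomputable def catalystEquiv : LTy n ≃ RTy n :=
  ⟨Fmap, Gmap, left_inv, right_inv⟩

end Catalyst

/-- Rooted labeled trees on `{1,…,n}` with a catalyst (an ordered pair `(u,v)` of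
distinct vertices with `v` a strict ancestor of `u`) are equinumerous with pairs
of rooted labeled trees, each with a distinguished vertex, whose label sets
partition `{1,…,n}` into two (necessarily nonempty) parts. -/
theorem stmt11 (n : ℕ) :
    Nat.card {x : (Fin n → Fin n) × Fin n × Fin n //
        IsTreeFun x.1 ∧ x.2.2 ≠ x.2.1 ∧ ∃ k, x.1^[k] x.2.1 = x.2.2} =
      Nat.card (Σ s : Finset (Fin n),
        {y : ((↥s → ↥s) × ↥s) ×
             ((↥(sᶜ : Finset (Fin n)) → ↥(sᶜ : Finset (Fin n))) × ↥(sᶜ : Finset (Fin n))) //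
          IsTreeFun y.1.1 ∧ IsTreeFun y.2.1}) :=
  Nat.card_congr (Catalyst.catalystEquiv (n := n))
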